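/- (Hoffman ratio bound) If G is a k-regular graph on n vertices with smallest adjacency eigenvalue λ < 0 (and k > λ), then the independence number of G satisfies α(G) ≤ -nλ/(k - λ). -/

import Mathlib

/-!
Let `s` be an independent set with `c` vertices in a `k`-regular graph on `n` vertices, and test
the Rayleigh bound `λ ‖x‖² ≤ xᵀAx` on `x = n • 𝟙_s - c • 𝟙`. Independence gives `𝟙_sᵀA𝟙_s = 0`
and regularity gives `A𝟙 = k𝟙`, so `‖x‖² = nc(n - c)` and `xᵀAx = -nkc²`; dividing by `nc`
yields `λ(n - c) ≤ -kc`, i.e. `c(k - λ) ≤ -nλ`.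
-/

open Matrix Finset

namespace Matrix.IsHermitian

variable {ι : Type*} [Fintype ι] {A : Matrix ι ι ℝ} {lam : ℝ}

theorem posSemidef_sub_smul_one [DecidableEq ι] (hA : A.IsHermitian)
    (hmin : ∀ μ : ℝ, (∃ x : ι → ℝ, x ≠ 0 ∧ A *ᵥ x = μ • x) → lam ≤ μ) :
    (A - lam • 1).PosSemidef := by
  have hB : (A - lam • 1).IsHermitian := hA.sub (by simp [Matrix.IsHermitian])
  rw [hB.posSemidef_iff_eigenvalues_nonneg]
  intro i
  have hv := hB.mulVec_eigenvectorBasis i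
  rw [sub_mulVec, smul_mulVec, one_mulVec, sub_eq_iff_eq_add, ← add_smul] at hv
  have hne : (⇑(hB.eigenvectorBasis i) : ι → ℝ) ≠ 0 := fun h =>
    hB.eigenvectorBasis.orthonormal.ne_zero i (by
      rw [← WithLp.toLp_ofLp (x := hB.eigenvectorBasis i), h, WithLp.toLp_zero])
  have := hmin _ ⟨_, hne, hv⟩
  simp only [Pi.zero_apply]
  linarith

theorem smul_dotProduct_self_le (hA : A.IsHermitian)
    (hmin : ∀ μ : ℝ, (∃ x : ι → ℝ, x ≠ 0 ∧ A *ᵥ x = μ • x) → lam ≤ μ) (x : ι → ℝ) :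
    lam * (x ⬝ᵥ x) ≤ x ⬝ᵥ A *ᵥ x := by
  classical
  have h := (hA.posSemidef_sub_smul_one hmin).dotProduct_mulVec_nonneg x
  rw [sub_mulVec, dotProduct_sub, smul_mulVec, one_mulVec, dotProduct_smul, star_trivial,
    smul_eq_mul] at h
  linarith

end Matrix.IsHermitian

theorem Matrix.indicator_one_dotProduct {V R : Type*} [Fintype V] [NonAssocSemiring R]
    (s : Finset V) (y : V → R) : (s : Set V).indicator 1 ⬝ᵥ y = ∑ v ∈ s, y v := by
  classical
  simp [dotProduct, Set.indicator_apply, Finset.sum_ite_mem]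

namespace SimpleGraph

variable {V : Type*} [Fintype V] {G : SimpleGraph V} [DecidableRel G.Adj] {s : Finset V}

theorem IsIndepSet.indicator_one_dotProduct_adjMatrix_mulVec (hs : G.IsIndepSet s) :
    (s : Set V).indicator 1 ⬝ᵥ G.adjMatrix ℝ *ᵥ (s : Set V).indicator 1 = 0 := by
  rw [indicator_one_dotProduct]
  refine Finset.sum_eq_zero fun v hv => ?_
  rw [adjMatrix_mulVec_apply]
  refine Finset.sum_eq_zero fun w hw => Set.indicator_of_notMem (fun hws => ?_) _
  rw [mem_neighborFinset] at hw
  exact hs hv hws (G.ne_of_adj hw) hw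

theorem IsRegularOfDegree.adjMatrix_mulVec_const_one {k : ℕ} (hreg : G.IsRegularOfDegree k) :
    G.adjMatrix ℝ *ᵥ Function.const V 1 = (k : ℝ) • Function.const V 1 := by
  ext v
  simp [hreg v]

theorem IsRegularOfDegree.card_mul_sub_le_of_isIndepSet {k : ℕ} (hreg : G.IsRegularOfDegree k)
    {lam : ℝ} (hray : ∀ x : V → ℝ, lam * (x ⬝ᵥ x) ≤ x ⬝ᵥ G.adjMatrix ℝ *ᵥ x) (hlam : lam ≤ 0)
    (hs : G.IsIndepSet s) : (#s : ℝ) * (k - lam) ≤ -(Fintype.card V : ℝ) * lam := by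
  set A := G.adjMatrix ℝ
  set n : ℝ := (Fintype.card V : ℝ)
  set c : ℝ := (#s : ℝ)
  set ind : V → ℝ := (s : Set V).indicator 1
  set one : V → ℝ := Function.const V 1
  have ind_ind : ind ⬝ᵥ ind = c := by
    rw [indicator_one_dotProduct]
    simp +contextual [ind, c]
  have ind_one : ind ⬝ᵥ one = c := by simp [ind, one, c, indicator_one_dotProduct]
  have one_one : one ⬝ᵥ one = n := by simp [one, n, dotProduct]
  have A_one : A *ᵥ one = (k : ℝ) • one := hreg.adjMatrix_mulVec_const_one
  have ind_A_ind : ind ⬝ᵥ A *ᵥ ind = 0 := hs.indicator_one_dotProduct_adjMatrix_mulVec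
  have one_A_ind : one ⬝ᵥ A *ᵥ ind = k * c := by
    rw [dotProduct_mulVec, ← mulVec_transpose, G.transpose_adjMatrix, A_one, smul_dotProduct,
      dotProduct_comm, ind_one, smul_eq_mul]
  set x := n • ind - c • one
  have x_x : x ⬝ᵥ x = n * c * (n - c) := by
    simp only [x, sub_dotProduct, dotProduct_sub, smul_dotProduct, dotProduct_smul, smul_eq_mul,
      ind_ind, ind_one, dotProduct_comm one ind, one_one]
    ring
  have x_A_x : x ⬝ᵥ A *ᵥ x = -(n * k * c ^ 2) := by
    simp only [x, mulVec_sub, mulVec_smul, A_one, sub_dotProduct, dotProduct_sub, smul_dotProduct,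
      dotProduct_smul, smul_eq_mul, ind_A_ind, one_A_ind, ind_one, one_one]
    ring
  have key : n * c * (lam * (n - c) + k * c) ≤ 0 := by nlinarith [hray x]
  rcases (show 0 ≤ c by positivity).eq_or_lt with hc | hc
  · rw [← hc]
    nlinarith [show 0 ≤ n by positivity]
  · have hn : 0 < n := hc.trans_le (Nat.cast_le.mpr (card_le_univ s))
    nlinarith [nonpos_of_mul_nonpos_right key (mul_pos hn hc)]

end SimpleGraph

theorem hoffman_ratio_bound_general (V : Type*) [Fintype V]
    (G : SimpleGraph V) [DecidableRel G.Adj] (k : ℕ) (lam : ℝ)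
    (hreg : G.IsRegularOfDegree k)
    (hmin : ∀ μ : ℝ, (∃ x : V → ℝ, x ≠ 0 ∧ (G.adjMatrix ℝ).mulVec x = μ • x) → lam ≤ μ)
    (hneg : lam < 0) (hk : lam < (k : ℝ)) :
    ∀ s : Finset V, (∀ v ∈ s, ∀ w ∈ s, v ≠ w → ¬ G.Adj v w) →
      (s.card : ℝ) ≤ -(Fintype.card V : ℝ) * lam / ((k : ℝ) - lam) := by
  intro s hs
  rw [le_div_iff₀ (sub_pos.mpr hk)]
  exact hreg.card_mul_sub_le_of_isIndepSet
    ((G.isHermitian_adjMatrix ℝ).smul_dotProduct_self_le hmin) hneg.le hs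

theorem hoffman_ratio_bound (V : Type*) [Fintype V] [DecidableEq V]
    (G : SimpleGraph V) [DecidableRel G.Adj] (k : ℕ) (lam : ℝ)
    (hreg : G.IsRegularOfDegree k)
    (hev : ∃ x : V → ℝ, x ≠ 0 ∧ (G.adjMatrix ℝ).mulVec x = lam • x)
    (hmin : ∀ μ : ℝ, (∃ x : V → ℝ, x ≠ 0 ∧ (G.adjMatrix ℝ).mulVec x = μ • x) → lam ≤ μ)
    (hneg : lam < 0) (hk : lam < (k : ℝ)) :
    ∀ s : Finset V, (∀ v ∈ s, ∀ w ∈ s, v ≠ w → ¬ G.Adj v w) →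
      (s.card : ℝ) ≤ -(Fintype.card V : ℝ) * lam / ((k : ℝ) - lam) :=
  hoffman_ratio_bound_general V G k lam hreg hmin hneg hk
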